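/- Let X be a finite-dimensional real inner product space, m ≥ 2, I = {1,…,m}, and for each i ∈ I let g_i : X → (−∞,+∞] be proper lower semicontinuous convex. On 𝐗 = X^m define Δ, 𝐠, 𝐓, and 𝐯 = (v₁,…,v_m) as in the product-space setup, and assume 0 ∈ Δ^⊥ + dom 𝐠* and 𝐙 = {𝐱 : 𝐯 ∈ N_Δ(𝐱) + ∂𝐠(𝐱 − 𝐯)} ≠ ∅. Let x₀ ∈ X and set x_{0,1} = ⋯ = x_{0,m} = x̄₀ = x₀; generate, for every n ∈ ℕ, x_{n+1,i} = x_{n,i} − x̄_n + Prox_{g_i}(2x̄_n − x_{n,i}) for each i ∈ I, and x̄_{n+1} = (1/m) Σ_{i∈I} x_{n+1,i}. Then (x̄_n) converges to a point x̄ ∈ argmin (Σ_{i∈I} g_i(· − v_i)), i.e., x̄ minimizes x ↦ Σ_{i∈I} g_i(x − v_i) over X. -/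

import Mathlib

open scoped RealInnerProductSpace Pointwise
open Filter Topology

noncomputable section

variable {X : Type*}

section Defs
variable [NormedAddCommGroup X] [InnerProductSpace ℝ X]

/-- `p` is the metric projection of `x` onto `S`: `p ∈ S` and
`⟪s − p, x − p⟫ ≤ 0` for all `s ∈ S`. -/
def IsMetricProj (S : Set X) (x p : X) : Prop :=
  p ∈ S ∧ ∀ s ∈ S, ⟪s - p, x - p⟫ ≤ (0 : ℝ)

/-- a function `X → (−∞,+∞]` is proper: never `−∞` and somewhere finite. -/
def EProper (g : X → EReal) : Prop :=
  (∀ x, g x ≠ ⊥) ∧ ∃ x, g x ≠ ⊤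

/-- convexity for extended-real-valued functions. -/
def EConvexOn (g : X → EReal) : Prop :=
  ∀ x y : X, ∀ a b : ℝ, 0 ≤ a → 0 ≤ b → a + b = 1 →
    g (a • x + b • y) ≤ (a : EReal) * g x + (b : EReal) * g y

/-- the convex subdifferential `∂g(x)`. -/
def ESubdiff (g : X → EReal) (x : X) : Set X :=
  {xs | ∀ z : X, g x + ((⟪z - x, xs⟫ : ℝ) : EReal) ≤ g z}

/-- the Fenchel conjugate `g*`. -/
def EConj (g : X → EReal) (xs : X) : EReal :=
  ⨆ x : X, ((⟪x, xs⟫ : ℝ) : EReal) - g x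

/-- `prox` is the proximal mapping of `g`: `prox x` minimizes
`y ↦ g y + ‖y − x‖²/2`. -/
def IsProx (g : X → EReal) (prox : X → X) : Prop :=
  ∀ x y : X,
    g (prox x) + ((‖prox x - x‖ ^ 2 / 2 : ℝ) : EReal) ≤
      g y + ((‖y - x‖ ^ 2 / 2 : ℝ) : EReal)

/-- the normal cone operator of a closed linear subspace:
`N_U(x) = U^⊥` if `x ∈ U`, and `∅` otherwise. -/
def normalCone (U : Submodule ℝ X) (x : X) : Set X :=
  {u | x ∈ U ∧ u ∈ Uᗮ}

/-- `c` is a weak cluster point of the sequence `s`, i.e. the weak limit of a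
subsequence of `s`. -/
def IsWeakClusterPt (s : ℕ → X) (c : X) : Prop :=
  ∃ φ : ℕ → ℕ, StrictMono φ ∧
    ∀ w : X, Tendsto (fun k => (⟪s (φ k), w⟫ : ℝ)) atTop (𝓝 ⟪c, w⟫)

end Defs

section ProductSetup
variable [NormedAddCommGroup X] [InnerProductSpace ℝ X] {m : ℕ}

/-- the inner product of the Hilbert direct sum `𝐗 = X^m`:
`⟪𝐱,𝐲⟫ = Σᵢ ⟪xᵢ,yᵢ⟫`. -/
def bInner (x y : Fin m → X) : ℝ := ∑ i, ⟪x i, y i⟫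

/-- the separable sum `𝐠 = ⊕ᵢ gᵢ`, `𝐠(x₁,…,x_m) = Σᵢ gᵢ(xᵢ)`. -/
def bSum (g : Fin m → X → EReal) (x : Fin m → X) : EReal := ∑ i, g i (x i)

/-- the subdifferential of `𝐠` on `𝐗` (equivalently, `∂g₁ × ⋯ × ∂g_m`). -/
def bSubdiff (g : Fin m → X → EReal) (x : Fin m → X) : Set (Fin m → X) :=
  {b | ∀ z : Fin m → X, bSum g x + ((bInner (z - x) b : ℝ) : EReal) ≤ bSum g z}

/-- metric projection characterization in `𝐗 = X^m`. -/
def bIsMetricProj (S : Set (Fin m → X)) (x p : Fin m → X) : Prop :=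
  p ∈ S ∧ ∀ s ∈ S, bInner (s - p) (x - p) ≤ (0 : ℝ)

end ProductSetup

/-!
The iteration is the orbit `𝐱ₙ₊₁ = 𝐓 𝐱ₙ` of the Douglas–Rachford operator of `(Δ, 𝐠)` on the
Hilbert sum `𝐗`, and `𝐓` is firmly nonexpansive because `Prox_𝐠` is. A point `c ∈ 𝐙` with
`𝐯 = a + b`, `a ∈ Δ^⊥`, `b ∈ ∂𝐠(c − 𝐯)`, gives `𝐲 = c + a` with `𝐓 𝐲 = 𝐲 − 𝐯`; hence the shifted
orbit `𝐳ₙ = 𝐱ₙ + n𝐯` is Fejér monotone with respect to every such `𝐲`, and `𝐱ₙ − 𝐱ₙ₊₁ → 𝐯`.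

Along the orbit the values of `𝐠` at the resolvent points `Prox_𝐠(R_Δ 𝐱ₙ)` are at most
`const − n‖P_Δ 𝐯‖²`, while `0 ∈ Δ^⊥ + dom 𝐠*` bounds them from below by an affine function;
so `P_Δ 𝐯 = 0` and `P_Δ 𝐱ₙ = P_Δ 𝐳ₙ` stays bounded. At a cluster point `ζ` of `(𝐳ₙ)` lower
semicontinuity shows that `b` is still a subgradient of `𝐠` at `P_Δ ζ − 𝐯`, so `P_Δ ζ + a` is another
shifted fixed point. Fejér monotonicity with respect to two of them forces all cluster points
to have the same projection onto `Δ`: `x̄ₙ` converges, and `b ∈ Δ^⊥` makes its limit a minimizer.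
-/

theorem EReal.coe_finset_sum {ι : Type*} (s : Finset ι) (r : ι → ℝ) :
    ((∑ i ∈ s, r i : ℝ) : EReal) = ∑ i ∈ s, (r i : EReal) :=
  map_sum (⟨⟨(↑), EReal.coe_zero⟩, EReal.coe_add⟩ : ℝ →+ EReal) r s

theorem EProper.coe_toReal {E : Type*} {f : E → EReal} (hf : EProper f) {x : E}
    (hx : f x ≠ ⊤) : ((f x).toReal : EReal) = f x :=
  EReal.coe_toReal hx (hf.1 x)

section Subdifferential
variable {E : Type*} [NormedAddCommGroup E] [InnerProductSpace ℝ E] {f : E → EReal}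

theorem ne_top_of_mem_eSubdiff (hf : EProper f) {x s : E} (hs : s ∈ ESubdiff f x) :
    f x ≠ ⊤ := by
  obtain ⟨z, hz⟩ := hf.2
  intro hx
  have := hs z
  rw [hx, EReal.top_add_coe, top_le_iff] at this
  exact hz this

theorem toReal_add_inner_le_of_mem_eSubdiff (hf : EProper f) {x s z : E} (hs : s ∈ ESubdiff f x)
    (hz : f z ≠ ⊤) : (f x).toReal + ⟪z - x, s⟫ ≤ (f z).toReal := by
  have := hs z
  rwa [← hf.coe_toReal (ne_top_of_mem_eSubdiff hf hs), ← hf.coe_toReal hz, ← EReal.coe_add,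
    EReal.coe_le_coe_iff] at this

theorem inner_sub_sub_nonneg_of_mem_eSubdiff (hf : EProper f) {x x' s s' : E}
    (hs : s ∈ ESubdiff f x) (hs' : s' ∈ ESubdiff f x') : 0 ≤ ⟪x - x', s - s'⟫ := by
  have h₁ := toReal_add_inner_le_of_mem_eSubdiff hf hs (ne_top_of_mem_eSubdiff hf hs')
  have h₂ := toReal_add_inner_le_of_mem_eSubdiff hf hs' (ne_top_of_mem_eSubdiff hf hs)
  have h₃ : ⟪x - x', s⟫ = -⟪x' - x, s⟫ := by rw [← inner_neg_left, neg_sub]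
  rw [inner_sub_right, h₃]
  linarith

theorem mem_eSubdiff_of_le (hf : EProper f) {x x' s : E} (hs : s ∈ ESubdiff f x)
    (hle : f x' ≤ ((f x).toReal + ⟪x' - x, s⟫ : ℝ)) : s ∈ ESubdiff f x' := by
  intro z
  calc f x' + ((⟪z - x', s⟫ : ℝ) : EReal)
      ≤ (((f x).toReal + ⟪x' - x, s⟫ : ℝ) : EReal) + ((⟪z - x', s⟫ : ℝ) : EReal) := by
        gcongr
    _ = f x + ((⟪z - x, s⟫ : ℝ) : EReal) := by
        conv_rhs => rw [← hf.coe_toReal (ne_top_of_mem_eSubdiff hf hs)]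
        rw [← EReal.coe_add, ← EReal.coe_add, add_assoc, ← inner_add_left,
          sub_add_sub_cancel']
    _ ≤ f z := hs z

theorem coe_inner_sub_le_of_eConj_ne_top (hf : EProper f) {w : E} (hw : EConj f w ≠ ⊤) (p : E) :
    ((⟪p, w⟫ - (EConj f w).toReal : ℝ) : EReal) ≤ f p := by
  rcases eq_or_ne (f p) ⊤ with hp | hp
  · simp [hp]
  have hle : ((⟪p, w⟫ : ℝ) : EReal) - f p ≤ EConj f w :=
    le_iSup (fun x => ((⟪x, w⟫ : ℝ) : EReal) - f x) p
  rw [← hf.coe_toReal hp, ← EReal.coe_sub] at hle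
  rw [← EReal.coe_toReal hw (ne_bot_of_le_ne_bot (EReal.coe_ne_bot _) hle),
    EReal.coe_le_coe_iff] at hle
  rw [← hf.coe_toReal hp, EReal.coe_le_coe_iff]
  linarith

end Subdifferential

theorem IsProx.ne_top {E : Type*} [NormedAddCommGroup E] {g : E → EReal} {prox : E → E}
    (hg : EProper g) (h : IsProx g prox) (q : E) : g (prox q) ≠ ⊤ := by
  obtain ⟨z, hz⟩ := hg.2
  intro htop
  have := h q z
  rw [htop, EReal.top_add_coe, top_le_iff, ← hg.coe_toReal hz, ← EReal.coe_add] at this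
  exact EReal.coe_ne_top _ this

theorem IsProx.sub_mem_eSubdiff {E : Type*} [NormedAddCommGroup E] [InnerProductSpace ℝ E]
    {g : E → EReal} {prox : E → E} (hg : EProper g) (hconv : EConvexOn g) (h : IsProx g prox)
    (q : E) : q - prox q ∈ ESubdiff g (prox q) := by
  intro z
  rcases eq_or_ne (g z) ⊤ with hz | hz
  · simp [hz]
  obtain ⟨Gp, hGp⟩ : ∃ r : ℝ, g (prox q) = r :=
    ⟨_, (hg.coe_toReal (h.ne_top hg q)).symm⟩
  obtain ⟨Gz, hGz⟩ : ∃ r : ℝ, g z = r := ⟨_, (hg.coe_toReal hz).symm⟩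
  set p := prox q
  rw [hGp, hGz, ← EReal.coe_add, EReal.coe_le_coe_iff]
  -- comparing `p` with the points `p + t • (z - p)` of the segment gives the claim up to `O(t)`
  have key : ∀ t ∈ Set.Ioc (0 : ℝ) 1,
      Gp + ⟪z - p, q - p⟫ ≤ Gz + t * (‖z - p‖ ^ 2 / 2) := by
    rintro t ⟨ht₀, ht₁⟩
    have hconv_t := hconv p z (1 - t) t (by linarith) ht₀.le (by ring)
    have hprox_t := (h q ((1 - t) • p + t • z)).trans (add_le_add_left hconv_t _)
    rw [hGp, hGz, ← EReal.coe_mul, ← EReal.coe_mul, ← EReal.coe_add, ← EReal.coe_add,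
      ← EReal.coe_add, EReal.coe_le_coe_iff] at hprox_t
    have hseg : (1 - t) • p + t • z - q = (p - q) + t • (z - p) := by module
    have hsym : ⟪z - p, q - p⟫ = -⟪p - q, z - p⟫ := by
      rw [real_inner_comm, ← inner_neg_left, neg_sub]
    rw [hseg, norm_add_sq_real, inner_smul_right, norm_smul, Real.norm_of_nonneg ht₀.le]
      at hprox_t
    rw [hsym]
    nlinarith
  have hlim : Tendsto (fun t : ℝ => Gz + t * (‖z - p‖ ^ 2 / 2)) (𝓝[>] 0)
      (𝓝 (Gz + 0 * (‖z - p‖ ^ 2 / 2))) :=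
    ((continuous_const.add (continuous_id.mul continuous_const)).tendsto 0).mono_left
      nhdsWithin_le_nhds
  rw [zero_mul, add_zero] at hlim
  exact ge_of_tendsto hlim (eventually_of_mem (Ioc_mem_nhdsGT one_pos) key)

section FirmlyNonexpansive
variable {H : Type*} [NormedAddCommGroup H] [InnerProductSpace ℝ H]

def FirmlyNonexpansive (T : H → H) : Prop :=
  ∀ x y, ‖T x - T y‖ ^ 2 ≤ ⟪T x - T y, x - y⟫

variable {f : H → EReal} {Q : H → H}

theorem firmlyNonexpansive_of_sub_mem_eSubdiff (hf : EProper f)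
    (hQ : ∀ q, q - Q q ∈ ESubdiff f (Q q)) : FirmlyNonexpansive Q := by
  intro x y
  have h := inner_sub_sub_nonneg_of_mem_eSubdiff hf (hQ x) (hQ y)
  rw [show x - Q x - (y - Q y) = (x - y) - (Q x - Q y) by abel, inner_sub_right,
    real_inner_self_eq_norm_sq] at h
  linarith

theorem eq_of_sub_mem_eSubdiff (hf : EProper f) (hQ : ∀ q, q - Q q ∈ ESubdiff f (Q q))
    {q p : H} (h : q - p ∈ ESubdiff f p) : Q q = p := by
  have hmono := inner_sub_sub_nonneg_of_mem_eSubdiff hf (hQ q) h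
  rw [show q - Q q - (q - p) = -(Q q - p) by abel, inner_neg_right,
    real_inner_self_eq_norm_sq] at hmono
  exact sub_eq_zero.mp (norm_eq_zero.mp (by nlinarith [norm_nonneg (Q q - p)]))

variable (K : Submodule ℝ H) [K.HasOrthogonalProjection]

def drOperator (Q : H → H) (x : H) : H :=
  x - K.starProjection x + Q (K.reflection x)

theorem firmlyNonexpansive_drOperator (hQ : FirmlyNonexpansive Q) :
    FirmlyNonexpansive (drOperator K Q) := by
  intro x y
  set u := x - y
  set π := K.starProjection u
  set δ := Q (K.reflection x) - Q (K.reflection y)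
  have hT : drOperator K Q x - drOperator K Q y = u - π + δ := by
    simp only [drOperator, u, π, δ, map_sub]
    abel
  have hR : K.reflection x - K.reflection y = π + π - u := by
    rw [← map_sub, Submodule.reflection_apply, two_smul]
  have hQδ : ⟪δ, δ⟫ ≤ ⟪δ, π + π - u⟫ := by
    rw [real_inner_self_eq_norm_sq, ← hR]
    exact hQ _ _
  have hπ : ⟪u - π, π⟫ = 0 :=
    K.starProjection_inner_eq_zero u π (K.starProjection_apply_mem u)
  rw [hT, ← real_inner_self_eq_norm_sq]
  simp only [inner_add_left, inner_add_right, inner_sub_left, inner_sub_right,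
    real_inner_comm π δ, real_inner_comm u δ, real_inner_comm u π] at hQδ hπ ⊢
  linarith

end FirmlyNonexpansive

section Fejer
variable {H : Type*} [NormedAddCommGroup H] [InnerProductSpace ℝ H] {T : H → H} {v y : H}

theorem FirmlyNonexpansive.norm_add_smul_sub_sq_le (hT : FirmlyNonexpansive T)
    (hy : T y = y - v) {u : H} (hu : 0 ≤ ⟪u - T u - v, v⟫) {t : ℝ} (ht : 0 ≤ t) :
    ‖T u + (t + 1) • v - y‖ ^ 2 + ‖u - T u - v‖ ^ 2 ≤ ‖u + t • v - y‖ ^ 2 := by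
  set d := u - T u - v
  have hfne : 0 ≤ ⟪(u - y) - d, d⟫ := by
    have h := hT u y
    rw [hy, show T u - (y - v) = (u - y) - d by simp only [d]; abel, ← real_inner_self_eq_norm_sq,
      show u - y = (u - y - d) + d by abel, inner_add_right] at h
    simpa using h
  have hA : ⟪u + t • v - y, d⟫ = ⟪(u - y) - d, d⟫ + ‖d‖ ^ 2 + t * ⟪d, v⟫ := by
    rw [show u + t • v - y = ((u - y) - d) + d + t • v by abel, inner_add_left, inner_add_left,
      real_inner_self_eq_norm_sq, real_inner_smul_left, real_inner_comm v]
  rw [show T u + (t + 1) • v - y = (u + t • v - y) - d by simp only [d]; module,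
    norm_sub_sq_real, hA]
  nlinarith [mul_nonneg ht hu]

variable {x : ℕ → H}

theorem FirmlyNonexpansive.norm_orbit_succ_sq_le (hT : FirmlyNonexpansive T)
    (hx : ∀ n, x (n + 1) = T (x n)) (hv : ∀ u, 0 ≤ ⟪u - T u - v, v⟫) (hy : T y = y - v)
    (n : ℕ) :
    ‖x (n + 1) + ((n + 1 : ℕ) : ℝ) • v - y‖ ^ 2 + ‖x n - x (n + 1) - v‖ ^ 2 ≤
      ‖x n + (n : ℝ) • v - y‖ ^ 2 := by
  rw [hx, Nat.cast_succ]
  exact hT.norm_add_smul_sub_sq_le hy (hv _) n.cast_nonneg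

theorem FirmlyNonexpansive.antitone_norm_orbit (hT : FirmlyNonexpansive T)
    (hx : ∀ n, x (n + 1) = T (x n)) (hv : ∀ u, 0 ≤ ⟪u - T u - v, v⟫) (hy : T y = y - v) :
    Antitone fun n : ℕ => ‖x n + (n : ℝ) • v - y‖ := by
  refine antitone_nat_of_succ_le fun n => ?_
  have h := hT.norm_orbit_succ_sq_le hx hv hy n
  exact (pow_le_pow_iff_left₀ (norm_nonneg _) (norm_nonneg _) two_ne_zero).mp
    (by nlinarith [sq_nonneg ‖x n - x (n + 1) - v‖])

theorem FirmlyNonexpansive.norm_orbit_displacement_le (hT : FirmlyNonexpansive T)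
    (hx : ∀ n, x (n + 1) = T (x n)) (hv : ∀ u, 0 ≤ ⟪u - T u - v, v⟫) (hy : T y = y - v)
    (n : ℕ) : ‖x n - x (n + 1) - v‖ ≤ ‖x 0 - y‖ := by
  have h := hT.norm_orbit_succ_sq_le hx hv hy n
  have hanti := hT.antitone_norm_orbit hx hv hy (Nat.zero_le n)
  simp only [Nat.cast_zero, zero_smul, add_zero] at hanti
  refine (pow_le_pow_iff_left₀ (norm_nonneg _) (norm_nonneg _) two_ne_zero).mp ?_
  nlinarith [sq_nonneg ‖x (n + 1) + ((n + 1 : ℕ) : ℝ) • v - y‖,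
    norm_nonneg (x n + (n : ℝ) • v - y)]

theorem FirmlyNonexpansive.tendsto_orbit_sub_succ (hT : FirmlyNonexpansive T)
    (hx : ∀ n, x (n + 1) = T (x n)) (hv : ∀ u, 0 ≤ ⟪u - T u - v, v⟫) (hy : T y = y - v) :
    Tendsto (fun n => x n - x (n + 1)) atTop (𝓝 v) := by
  have htelescope : ∀ N, ∑ n ∈ Finset.range N, ‖x n - x (n + 1) - v‖ ^ 2
      + ‖x N + (N : ℝ) • v - y‖ ^ 2 ≤ ‖x 0 - y‖ ^ 2 := by
    intro N
    induction N with
    | zero => simp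
    | succ N ih =>
      rw [Finset.sum_range_succ]
      linarith [hT.norm_orbit_succ_sq_le hx hv hy N]
  have hsum : Summable fun n => ‖x n - x (n + 1) - v‖ ^ 2 :=
    summable_of_sum_range_le (c := ‖x 0 - y‖ ^ 2) (fun n => sq_nonneg _)
      fun N => by linarith [htelescope N, sq_nonneg ‖x N + (N : ℝ) • v - y‖]
  have hsq := (Real.continuous_sqrt.tendsto 0).comp hsum.tendsto_atTop_zero
  simp only [Function.comp_def, Real.sqrt_sq (norm_nonneg _), Real.sqrt_zero] at hsq
  exact tendsto_sub_nhds_zero_iff.mp (tendsto_zero_iff_norm_tendsto_zero.mpr hsq)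

end Fejer

theorem norm_sub_eq_of_antitone {H : Type*} [NormedAddCommGroup H] {z : ℕ → H}
    {y ζ₁ ζ₂ : H} {φ ψ : ℕ → ℕ} (hz : Antitone fun n => ‖z n - y‖) (hφ : Tendsto φ atTop atTop)
    (hψ : Tendsto ψ atTop atTop) (h₁ : Tendsto (z ∘ φ) atTop (𝓝 ζ₁))
    (h₂ : Tendsto (z ∘ ψ) atTop (𝓝 ζ₂)) : ‖ζ₁ - y‖ = ‖ζ₂ - y‖ := by
  have hL := tendsto_atTop_ciInf hz ⟨0, by rintro _ ⟨n, rfl⟩; exact norm_nonneg _⟩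
  exact (tendsto_nhds_unique ((h₁.sub_const y).norm) (hL.comp hφ)).trans
    (tendsto_nhds_unique ((h₂.sub_const y).norm) (hL.comp hψ)).symm

theorem inner_sub_sub_eq_zero_of_norm_sub_eq {H : Type*} [NormedAddCommGroup H]
    [InnerProductSpace ℝ H] {ζ₁ ζ₂ y₁ y₂ : H} (h₁ : ‖ζ₁ - y₁‖ = ‖ζ₂ - y₁‖)
    (h₂ : ‖ζ₁ - y₂‖ = ‖ζ₂ - y₂‖) : ⟪ζ₁ - ζ₂, y₁ - y₂⟫ = 0 := by
  have e₁ := congrArg (· ^ 2) h₁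
  have e₂ := congrArg (· ^ 2) h₂
  simp only [norm_sub_sq_real] at e₁ e₂
  rw [inner_sub_left, inner_sub_right, inner_sub_right]
  linarith

theorem LowerSemicontinuous.le_of_tendsto {α γ ι : Type*} [TopologicalSpace α] [LinearOrder γ]
    [TopologicalSpace γ] [OrderTopology γ] [DenselyOrdered γ] {f : α → γ}
    (hf : LowerSemicontinuous f) {l : Filter ι} [l.NeBot] {u : ι → α} {x : α} {L : γ}
    (hu : Tendsto u l (𝓝 x)) (hfu : Tendsto (f ∘ u) l (𝓝 L)) : f x ≤ L := by
  by_contra! hlt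
  obtain ⟨t, hLt, htx⟩ := exists_between hlt
  obtain ⟨k, hk₁, hk₂⟩ :=
    ((hu.eventually (hf x t htx)).and (hfu.eventually (Iio_mem_nhds hLt))).exists
  exact lt_asymm hk₁ hk₂

section DouglasRachford
variable {H : Type*} [NormedAddCommGroup H] [InnerProductSpace ℝ H] {K : Submodule ℝ H}
  [K.HasOrthogonalProjection] {f : H → EReal} {Q : H → H}

theorem drOperator_add_eq (hf : EProper f) (hQ : ∀ q, q - Q q ∈ ESubdiff f (Q q)) {c a v : H}
    (hc : c ∈ K) (ha : a ∈ Kᗮ) (hb : v - a ∈ ESubdiff f (c - v)) :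
    drOperator K Q (c + a) = c + a - v := by
  have hP : K.starProjection (c + a) = c := by
    rw [map_add, K.starProjection_eq_self_iff.mpr hc, K.starProjection_apply_eq_zero_iff.mpr ha,
      add_zero]
  have hR : K.reflection (c + a) = c - a := by
    rw [Submodule.reflection_apply, hP, two_smul]
    abel
  have hQ' : Q (c - a) = c - v :=
    eq_of_sub_mem_eSubdiff hf hQ (by rwa [show c - a - (c - v) = v - a by abel])
  simp only [drOperator, hP, hR, hQ']
  abel

theorem inner_starProjection_self_eq_norm_sq (u : H) :
    ⟪K.starProjection u, u⟫ = ‖K.starProjection u‖ ^ 2 := by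
  have := K.starProjection_inner_eq_zero u _ (K.starProjection_apply_mem u)
  rw [inner_sub_left, real_inner_comm, real_inner_self_eq_norm_sq] at this
  linarith

variable (K f Q) in
/-- `Q` is the resolvent of `∂f`, `displacement` is the variational inequality characterizing the
minimal displacement vector `v`, and `(c, a)` encodes a point `c` of `𝐙`: `v ∈ a + ∂f(c − v)` with
`a ∈ Kᗮ`. -/
structure IsDROrbit (x : ℕ → H) (v c a : H) : Prop where
  proper : EProper f
  sub_mem_eSubdiff : ∀ q, q - Q q ∈ ESubdiff f (Q q)
  orbit : ∀ n, x (n + 1) = drOperator K Q (x n)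
  displacement : ∀ u, 0 ≤ ⟪u - drOperator K Q u - v, v⟫
  mem : c ∈ K
  mem_orthogonal : a ∈ Kᗮ
  mem_eSubdiff : v - a ∈ ESubdiff f (c - v)

namespace IsDROrbit
variable {x : ℕ → H} {v c a : H}

theorem firmlyNonexpansive (h : IsDROrbit K f Q x v c a) : FirmlyNonexpansive (drOperator K Q) :=
  firmlyNonexpansive_drOperator K
    (firmlyNonexpansive_of_sub_mem_eSubdiff h.proper h.sub_mem_eSubdiff)

theorem antitone_norm_shift_sub (h : IsDROrbit K f Q x v c a) {c' : H} (hc' : c' ∈ K)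
    (hb : v - a ∈ ESubdiff f (c' - v)) :
    Antitone fun n : ℕ => ‖x n + (n : ℝ) • v - (c' + a)‖ :=
  h.firmlyNonexpansive.antitone_norm_orbit h.orbit h.displacement
    (drOperator_add_eq h.proper h.sub_mem_eSubdiff hc' h.mem_orthogonal hb)

theorem norm_shift_sub_le (h : IsDROrbit K f Q x v c a) (n : ℕ) :
    ‖x n + (n : ℝ) • v - (c + a)‖ ≤ ‖x 0 - (c + a)‖ := by
  simpa using h.antitone_norm_shift_sub h.mem h.mem_eSubdiff (Nat.zero_le n)

theorem norm_displacement_le (h : IsDROrbit K f Q x v c a) (n : ℕ) :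
    ‖x n - x (n + 1) - v‖ ≤ ‖x 0 - (c + a)‖ :=
  h.firmlyNonexpansive.norm_orbit_displacement_le h.orbit h.displacement
    (drOperator_add_eq h.proper h.sub_mem_eSubdiff h.mem h.mem_orthogonal h.mem_eSubdiff) n

theorem tendsto_displacement (h : IsDROrbit K f Q x v c a) :
    Tendsto (fun n => x n - x (n + 1) - v) atTop (𝓝 0) :=
  tendsto_sub_nhds_zero_iff.mpr <| h.firmlyNonexpansive.tendsto_orbit_sub_succ h.orbit
    h.displacement
    (drOperator_add_eq h.proper h.sub_mem_eSubdiff h.mem h.mem_orthogonal h.mem_eSubdiff)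


theorem resolvent_reflection_eq (h : IsDROrbit K f Q x v c a) (n : ℕ) :
    Q (K.reflection (x n)) = K.starProjection (x n) - v - (x n - x (n + 1) - v) := by
  rw [h.orbit n, drOperator]
  abel

theorem toReal_resolvent_le (h : IsDROrbit K f Q x v c a) (n : ℕ) :
    (f (Q (K.reflection (x n)))).toReal ≤ (f (c - v)).toReal
      + ⟪Q (K.reflection (x n)) - (c - v), v - a⟫
      + ⟪x n - x (n + 1) - v, x n + (n : ℝ) • v - (c + a)⟫ := by
  set u := x n
  set π := K.starProjection u
  set e := u - x (n + 1) - v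
  have hp : Q (K.reflection u) = π - v - e := h.resolvent_reflection_eq n
  have hsub := toReal_add_inner_le_of_mem_eSubdiff h.proper (h.sub_mem_eSubdiff (K.reflection u))
    (ne_top_of_mem_eSubdiff h.proper h.mem_eSubdiff)
  have hdisp : 0 ≤ ⟪e, v⟫ := by simpa only [e, h.orbit n] using h.displacement u
  have horth : ⟪π - c, π - u + a⟫ = 0 :=
    Submodule.inner_right_of_mem_orthogonal (K.sub_mem (K.starProjection_apply_mem u) h.mem)
      (Kᗮ.add_mem (by simpa using Kᗮ.neg_mem (K.sub_starProjection_mem_orthogonal u))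
        h.mem_orthogonal)
  rw [hp] at hsub ⊢
  rw [Submodule.reflection_apply, show c - v - (π - v - e) = -((π - c) - e) by abel,
    show 2 • K.starProjection u - u - (π - v - e) = (π - u + a) + e + (v - a) by
      rw [two_smul]; abel,
    inner_neg_left] at hsub
  rw [show π - v - e - (c - v) = (π - c) - e by abel,
    show u + (n : ℝ) • v - (c + a) = (u - c - a - e) + e + (n : ℝ) • v by abel]
  simp only [inner_add_right, inner_sub_left, inner_sub_right, inner_smul_right,
    real_inner_comm e] at hsub horth ⊢
  nlinarith [real_inner_self_nonneg (x := e), mul_nonneg (Nat.cast_nonneg (α := ℝ) n) hdisp]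


theorem exists_nat_mul_norm_sq_starProjection_le (h : IsDROrbit K f Q x v c a) {w : H} {C : ℝ}
    (hw : w ∈ Kᗮ) (hminor : ∀ p, ((⟪p, w⟫ - C : ℝ) : EReal) ≤ f p) :
    ∃ M, ∀ n : ℕ, (n : ℝ) * ‖K.starProjection v‖ ^ 2 ≤ M := by
  set D := ‖x 0 - (c + a)‖
  -- the drift `n • v` of the orbit makes the values of `f` at the resolvent points decrease like
  -- `-n ‖P v‖²`, while the affine minorant keeps them bounded from below
  refine ⟨(f (c - v)).toReal + C + (‖v‖ + D) * ‖w‖ + D * ‖K.starProjection v‖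
    + D * ‖v - a‖ + D * D, fun n => ?_⟩
  have hPa : ∀ u, ⟪K.starProjection u, a⟫ = 0 := fun u =>
    Submodule.inner_right_of_mem_orthogonal (K.starProjection_apply_mem _) h.mem_orthogonal
  have hPvv := inner_starProjection_self_eq_norm_sq (K := K) v
  have hz : ‖x n + (n : ℝ) • v - (c + a)‖ ≤ D := h.norm_shift_sub_le n
  have he : ‖x n - x (n + 1) - v‖ ≤ D := h.norm_displacement_le n
  have hupper := h.toReal_resolvent_le n
  have hlower : ⟪Q (K.reflection (x n)), w⟫ - C ≤ (f (Q (K.reflection (x n)))).toReal := by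
    rw [← EReal.coe_le_coe_iff,
      h.proper.coe_toReal (ne_top_of_mem_eSubdiff h.proper (h.sub_mem_eSubdiff _))]
    exact hminor _
  generalize (f (Q (K.reflection (x n)))).toReal = F at hupper hlower
  rw [h.resolvent_reflection_eq n] at hupper hlower
  rw [inner_sub_left, inner_sub_left,
    Submodule.inner_right_of_mem_orthogonal (K.starProjection_apply_mem _) hw] at hlower
  have hPx : K.starProjection (x n) = K.starProjection (x n + (n : ℝ) • v - (c + a)) + c
      - (n : ℝ) • K.starProjection v := by
    rw [map_sub, map_add, map_add, map_smul, K.starProjection_eq_self_iff.mpr h.mem,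
      K.starProjection_apply_eq_zero_iff.mpr h.mem_orthogonal]
    abel
  generalize x n + (n : ℝ) • v - (c + a) = u at hz hupper hPx
  generalize x n - x (n + 1) - v = e at he hupper hlower
  rw [hPx, show K.starProjection u + c - (n : ℝ) • K.starProjection v - v - e - (c - v)
      = K.starProjection u - (n : ℝ) • K.starProjection v - e by abel,
    inner_sub_left, inner_sub_left, inner_smul_left, inner_sub_right, inner_sub_right,
    inner_sub_right, hPa, hPa, hPvv, K.inner_starProjection_left_eq_right,
    RCLike.conj_to_real] at hupper
  have hD : 0 ≤ D := norm_nonneg _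
  have h₁ := abs_real_inner_le_norm v w
  have h₂ := abs_real_inner_le_norm e w
  have h₃ := abs_real_inner_le_norm u (K.starProjection v)
  have h₄ := abs_real_inner_le_norm e (v - a)
  have h₅ := abs_real_inner_le_norm e u
  rw [inner_sub_right] at h₄
  rw [abs_le] at h₁ h₂ h₃ h₄ h₅
  nlinarith [mul_le_mul_of_nonneg_right he (norm_nonneg w),
    mul_le_mul_of_nonneg_right hz (norm_nonneg (K.starProjection v)),
    mul_le_mul_of_nonneg_right he (norm_nonneg (v - a)), mul_le_mul he hz (norm_nonneg _) hD]

theorem starProjection_eq_zero (h : IsDROrbit K f Q x v c a) {w : H} {C : ℝ} (hw : w ∈ Kᗮ)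
    (hminor : ∀ p, ((⟪p, w⟫ - C : ℝ) : EReal) ≤ f p) : K.starProjection v = 0 := by
  obtain ⟨M, hM⟩ := h.exists_nat_mul_norm_sq_starProjection_le hw hminor
  by_contra hne
  have hpos : 0 < ‖K.starProjection v‖ ^ 2 := by positivity
  obtain ⟨n, hn⟩ := exists_nat_gt (M / ‖K.starProjection v‖ ^ 2)
  rw [div_lt_iff₀ hpos] at hn
  linarith [hM n]

theorem mem_eSubdiff_of_tendsto (h : IsDROrbit K f Q x v c a) (hlsc : LowerSemicontinuous f)
    (hPv : K.starProjection v = 0) {φ : ℕ → ℕ} (hφ : Tendsto φ atTop atTop) {ζ : H}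
    (hζ : Tendsto (fun k => x (φ k) + (φ k : ℝ) • v) atTop (𝓝 ζ)) :
    v - a ∈ ESubdiff f (K.starProjection ζ - v) := by
  set D := ‖x 0 - (c + a)‖
  set p := fun n => Q (K.reflection (x n))
  set e := fun n => x n - x (n + 1) - v
  set ℓ := fun n => (f (c - v)).toReal + ⟪p n - (c - v), v - a⟫
  have hp : ∀ n, p n = K.starProjection (x n + (n : ℝ) • v) - v - e n := fun n => by
    rw [map_add, map_smul, hPv, smul_zero, add_zero]
    exact h.resolvent_reflection_eq n
  have hne : ∀ n, f (p n) ≠ ⊤ := fun n =>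
    ne_top_of_mem_eSubdiff h.proper (h.sub_mem_eSubdiff _)
  -- the values of `f` at the resolvent points are squeezed between the affine minorant given by
  -- the subgradient `v - a` and that minorant plus `⟪e n, x n + n • v - (c + a)⟫`, which tends to 0
  have hgap : ∀ n, ‖(f (p n)).toReal - ℓ n‖ ≤ D * ‖e n‖ := by
    intro n
    have hlow := toReal_add_inner_le_of_mem_eSubdiff h.proper h.mem_eSubdiff (hne n)
    have hupp := h.toReal_resolvent_le n
    have hCS := real_inner_le_norm (e n) (x n + (n : ℝ) • v - (c + a))
    have hz := mul_le_mul_of_nonneg_left (h.norm_shift_sub_le n) (norm_nonneg (e n))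
    rw [Real.norm_of_nonneg (by simp only [ℓ]; linarith)]
    simp only [ℓ]
    linarith
  have he : Tendsto (fun k => e (φ k)) atTop (𝓝 0) := h.tendsto_displacement.comp hφ
  have hpt : Tendsto (fun k => p (φ k)) atTop (𝓝 (K.starProjection ζ - v)) := by
    simp only [hp]
    simpa using ((K.starProjection.continuous.tendsto ζ).comp hζ |>.sub_const v).sub he
  have hℓ : Tendsto (fun k => ℓ (φ k)) atTop
      (𝓝 ((f (c - v)).toReal + ⟪K.starProjection ζ - v - (c - v), v - a⟫)) :=
    tendsto_const_nhds.add (((hpt.sub_const (c - v)).inner tendsto_const_nhds))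
  have hF : Tendsto (fun k => (f (p (φ k))).toReal) atTop
      (𝓝 ((f (c - v)).toReal + ⟪K.starProjection ζ - v - (c - v), v - a⟫)) := by
    have hsmall : Tendsto (fun k => (f (p (φ k))).toReal - ℓ (φ k)) atTop (𝓝 0) :=
      squeeze_zero_norm (fun k => hgap (φ k)) (by simpa using (he.norm.const_mul D))
    simpa using hsmall.add hℓ
  refine mem_eSubdiff_of_le h.proper h.mem_eSubdiff (hlsc.le_of_tendsto hpt ?_)
  simpa [Function.comp_def, h.proper.coe_toReal (hne _)] using EReal.tendsto_coe.mpr hF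

theorem sub_mem_orthogonal (h : IsDROrbit K f Q x v c a) (hPv : K.starProjection v = 0) :
    v - a ∈ Kᗮ := by
  rw [← K.starProjection_apply_eq_zero_iff, map_sub, hPv,
    K.starProjection_apply_eq_zero_iff.mpr h.mem_orthogonal, sub_zero]

theorem starProjection_eq_of_tendsto (h : IsDROrbit K f Q x v c a)
    (hlsc : LowerSemicontinuous f) (hPv : K.starProjection v = 0) {φ ψ : ℕ → ℕ}
    (hφ : Tendsto φ atTop atTop) (hψ : Tendsto ψ atTop atTop) {ζ₁ ζ₂ : H}
    (h₁ : Tendsto (fun k => x (φ k) + (φ k : ℝ) • v) atTop (𝓝 ζ₁))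
    (h₂ : Tendsto (fun k => x (ψ k) + (ψ k : ℝ) • v) atTop (𝓝 ζ₂)) :
    K.starProjection ζ₁ = K.starProjection ζ₂ := by
  have hnorm : ∀ ζ, v - a ∈ ESubdiff f (K.starProjection ζ - v) →
      ‖ζ₁ - (K.starProjection ζ + a)‖ = ‖ζ₂ - (K.starProjection ζ + a)‖ :=
    fun ζ hζ =>
    norm_sub_eq_of_antitone (z := fun n : ℕ => x n + (n : ℝ) • v)
      (h.antitone_norm_shift_sub (K.starProjection_apply_mem ζ) hζ) hφ hψ h₁ h₂
  have horth := inner_sub_sub_eq_zero_of_norm_sub_eq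
    (hnorm ζ₁ (h.mem_eSubdiff_of_tendsto hlsc hPv hφ h₁))
    (hnorm ζ₂ (h.mem_eSubdiff_of_tendsto hlsc hPv hψ h₂))
  rw [add_sub_add_right_eq_sub, ← map_sub, real_inner_comm,
    inner_starProjection_self_eq_norm_sq] at horth
  exact sub_eq_zero.mp (by simpa [map_sub] using horth)

theorem exists_tendsto_starProjection [ProperSpace H] (h : IsDROrbit K f Q x v c a)
    (hlsc : LowerSemicontinuous f) (hPv : K.starProjection v = 0) :
    ∃ c' ∈ K, v - a ∈ ESubdiff f (c' - v) ∧
      Tendsto (fun n => K.starProjection (x n)) atTop (𝓝 c') := by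
  have hbdd : ∀ n : ℕ,
      x n + (n : ℝ) • v ∈ Metric.closedBall (c + a) ‖x 0 - (c + a)‖ :=
    fun n => by simpa [dist_eq_norm] using h.norm_shift_sub_le n
  obtain ⟨ζ, -, φ, hφ, hζ⟩ := tendsto_subseq_of_bounded Metric.isBounded_closedBall hbdd
  refine ⟨K.starProjection ζ, K.starProjection_apply_mem ζ,
    h.mem_eSubdiff_of_tendsto hlsc hPv hφ.tendsto_atTop hζ, ?_⟩
  have hPx : ∀ n : ℕ, K.starProjection (x n) = K.starProjection (x n + (n : ℝ) • v) :=
    fun n => by rw [map_add, map_smul, hPv, smul_zero, add_zero]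
  simp only [hPx]
  refine tendsto_of_subseq_tendsto fun ns hns => ?_
  obtain ⟨ζ', -, ψ, hψ, hζ'⟩ :=
    tendsto_subseq_of_bounded Metric.isBounded_closedBall fun k => hbdd (ns k)
  refine ⟨ψ, ?_⟩
  rw [h.starProjection_eq_of_tendsto hlsc hPv hφ.tendsto_atTop (hns.comp hψ.tendsto_atTop)
    hζ hζ']
  exact (K.starProjection.continuous.tendsto ζ').comp hζ'

end IsDROrbit
end DouglasRachford

section Diagonal
variable [NormedAddCommGroup X] [InnerProductSpace ℝ X] {m : ℕ}

variable (X m) in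
def diagonal : Submodule ℝ (PiLp 2 fun _ : Fin m => X) where
  carrier := {x | ∀ i j, x i = x j}
  add_mem' hx hy i j := by simp [hx i j, hy i j]
  zero_mem' _ _ := rfl
  smul_mem' c x hx i j := by simp [hx i j]

theorem const_mem_diagonal (c : X) : WithLp.toLp 2 (fun _ : Fin m => c) ∈ diagonal X m :=
  fun _ _ => rfl

theorem mem_diagonal_orthogonal_iff {u : PiLp 2 fun _ : Fin m => X} :
    u ∈ (diagonal X m)ᗮ ↔ ∑ i, u i = 0 := by
  rw [Submodule.mem_orthogonal]
  constructor
  · intro h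
    have := h _ (const_mem_diagonal (∑ i, u i))
    rw [PiLp.inner_apply, ← inner_sum] at this
    exact inner_self_eq_zero.mp this
  · intro h w hw
    rcases isEmpty_or_nonempty (Fin m) with hm | ⟨⟨i₀⟩⟩
    · simp [PiLp.inner_apply]
    rw [PiLp.inner_apply]
    simp only [fun i => hw i i₀]
    rw [← inner_sum, h, inner_zero_right]

theorem starProjection_diagonal_apply [FiniteDimensional ℝ X] (x : PiLp 2 fun _ : Fin m => X) :
    (diagonal X m).starProjection x = WithLp.toLp 2 fun _ => (m : ℝ)⁻¹ • ∑ i, x i := by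
  refine Submodule.eq_starProjection_of_mem_orthogonal (const_mem_diagonal _) ?_
  rw [mem_diagonal_orthogonal_iff]
  rcases eq_or_ne m 0 with rfl | hm
  · simp
  simp only [PiLp.sub_apply, Finset.sum_sub_distrib, Finset.sum_const,
    Finset.card_univ, Fintype.card_fin, ← Nat.cast_smul_eq_nsmul ℝ]
  rw [smul_inv_smul₀ (Nat.cast_ne_zero.mpr hm), sub_self]

end Diagonal

section SeparableSum
variable {m : ℕ} {g : Fin m → X → EReal}

def sepSum (g : Fin m → X → EReal) (x : PiLp 2 fun _ : Fin m => X) : EReal :=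
  ∑ i, g i (x i)

theorem eProper_sepSum (hg : ∀ i, EProper (g i)) : EProper (sepSum g) := by
  refine ⟨fun x => Finset.sum_induction _ (· ≠ ⊥)
    (fun a b ha hb => EReal.add_ne_bot_iff.mpr ⟨ha, hb⟩) EReal.zero_ne_bot
    fun i _ => (hg i).1 (x i), ?_⟩
  choose z hz using fun i => (hg i).2
  refine ⟨WithLp.toLp 2 z, ?_⟩
  have hval : sepSum g (WithLp.toLp 2 z) = ((∑ i, (g i (z i)).toReal : ℝ) : EReal) := by
    rw [EReal.coe_finset_sum]
    exact Finset.sum_congr rfl fun i _ => ((hg i).coe_toReal (hz i)).symm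
  rw [hval]
  exact EReal.coe_ne_top _

theorem lowerSemicontinuous_sepSum [NormedAddCommGroup X] (hg : ∀ i, EProper (g i))
    (hlsc : ∀ i, LowerSemicontinuous (g i)) : LowerSemicontinuous (sepSum g) := by
  have hsum : sepSum g = ∑ i, fun x : PiLp 2 (fun _ : Fin m => X) => g i (x i) := by
    ext x
    simp [sepSum]
  rw [hsum]
  refine (Finset.sum_induction _ (fun F => LowerSemicontinuous F ∧ ∀ x, F x ≠ ⊥)
    (fun F G hF hG => ⟨hF.1.add' hG.1 fun x => EReal.continuousAt_add (Or.inr (hG.2 x))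
      (Or.inl (hF.2 x)), fun x => EReal.add_ne_bot_iff.mpr ⟨hF.2 x, hG.2 x⟩⟩)
    ⟨lowerSemicontinuous_const, fun _ => EReal.zero_ne_bot⟩
    fun i _ => ⟨(hlsc i).comp (PiLp.continuous_apply 2 _ i), fun x => (hg i).1 _⟩).1

variable [NormedAddCommGroup X] [InnerProductSpace ℝ X]

theorem mem_eSubdiff_sepSum {x s : PiLp 2 fun _ : Fin m => X}
    (h : ∀ i, s i ∈ ESubdiff (g i) (x i)) : s ∈ ESubdiff (sepSum g) x := by
  intro z
  rw [PiLp.inner_apply, EReal.coe_finset_sum, sepSum, sepSum, ← Finset.sum_add_distrib]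
  exact Finset.sum_le_sum fun i _ => h i (z i)

theorem exists_coe_inner_sub_le_sepSum (hg : ∀ i, EProper (g i)) {w : Fin m → X}
    (hw : ∀ i, EConj (g i) (w i) ≠ ⊤) :
    ∃ C : ℝ, ∀ p, ((⟪p, WithLp.toLp 2 w⟫ - C : ℝ) : EReal) ≤ sepSum g p := by
  refine ⟨∑ i, (EConj (g i) (w i)).toReal, fun p => ?_⟩
  rw [PiLp.inner_apply, ← Finset.sum_sub_distrib, EReal.coe_finset_sum]
  exact Finset.sum_le_sum fun i _ => coe_inner_sub_le_of_eConj_ne_top (hg i) (hw i) (p i)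

end SeparableSum

section ParallelSplitting
variable [NormedAddCommGroup X] [InnerProductSpace ℝ X] {m : ℕ}

def proxPi (prox : Fin m → X → X) (x : PiLp 2 fun _ : Fin m => X) : PiLp 2 fun _ : Fin m => X :=
  WithLp.toLp 2 fun i => prox i (x i)

theorem bInner_eq_inner (x y : Fin m → X) : bInner x y = ⟪WithLp.toLp 2 x, WithLp.toLp 2 y⟫ :=
  rfl

theorem eq_const_of_mem_diagonal {x : PiLp 2 fun _ : Fin m => X} (hx : x ∈ diagonal X m)
    (i₀ : Fin m) : x = WithLp.toLp 2 fun _ => x i₀ := by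
  ext i
  exact hx i i₀

theorem sum_sub_le_of_mem_eSubdiff {g : Fin m → X → EReal} {c : X}
    {v s : PiLp 2 fun _ : Fin m => X}
    (hs : s ∈ ESubdiff (sepSum g) (WithLp.toLp 2 (fun _ => c) - v))
    (hsK : s ∈ (diagonal X m)ᗮ) (z : X) : ∑ i, g i (c - v i) ≤ ∑ i, g i (z - v i) := by
  have h := hs (WithLp.toLp 2 (fun _ => z) - v)
  rw [show WithLp.toLp 2 (fun _ => z) - v - (WithLp.toLp 2 (fun _ => c) - v)
      = WithLp.toLp 2 (fun _ => z - c) by ext; simp,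
    Submodule.inner_right_of_mem_orthogonal (const_mem_diagonal _) hsK, EReal.coe_zero,
    add_zero] at h
  simpa [sepSum] using h

variable [FiniteDimensional ℝ X]

theorem drOperator_diagonal_apply (prox : Fin m → X → X) (x : PiLp 2 fun _ : Fin m => X)
    (i : Fin m) :
    drOperator (diagonal X m) (proxPi prox) x i
      = x i - (m : ℝ)⁻¹ • ∑ j, x j + prox i (2 • ((m : ℝ)⁻¹ • ∑ j, x j) - x i) := by
  simp [drOperator, Submodule.reflection_apply, starProjection_diagonal_apply, proxPi]

theorem isDROrbit_parallelSplitting {g : Fin m → X → EReal} (hg : ∀ i, EProper (g i))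
    (hgconv : ∀ i, EConvexOn (g i)) {prox : Fin m → X → X}
    (hprox : ∀ i, IsProx (g i) (prox i))
    {T : (Fin m → X) → (Fin m → X)}
    (hT : ∀ y, WithLp.toLp 2 (T y) = drOperator (diagonal X m) (proxPi prox) (WithLp.toLp 2 y))
    {v : Fin m → X} (hv : bIsMetricProj (closure (Set.range fun y => y - T y)) 0 v)
    {xs : ℕ → Fin m → X} (hxs : ∀ n, xs (n + 1) = T (xs n)) {c : X} {a b : Fin m → X}
    (ha : ∑ i, a i = 0) (hb : b ∈ bSubdiff g ((fun _ => c) - v)) (hvab : v = a + b) :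
    IsDROrbit (diagonal X m) (sepSum g) (proxPi prox) (fun n => WithLp.toLp 2 (xs n))
      (WithLp.toLp 2 v) (WithLp.toLp 2 fun _ => c) (WithLp.toLp 2 a) where
  proper := eProper_sepSum hg
  sub_mem_eSubdiff q :=
    mem_eSubdiff_sepSum fun i => (hprox i).sub_mem_eSubdiff (hg i) (hgconv i) (q i)
  orbit n := by rw [← hT, hxs]
  displacement y := by
    have h := hv.2 _ (subset_closure ⟨y.ofLp, rfl⟩)
    rw [bInner_eq_inner, WithLp.toLp_sub, WithLp.toLp_sub, WithLp.toLp_sub, hT, WithLp.toLp_ofLp,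
      WithLp.toLp_zero, zero_sub, inner_neg_right] at h
    linarith
  mem := const_mem_diagonal c
  mem_orthogonal := mem_diagonal_orthogonal_iff.mpr ha
  mem_eSubdiff z := by
    rw [show WithLp.toLp 2 v - WithLp.toLp 2 a = WithLp.toLp 2 b by rw [hvab]; ext; simp]
    exact hb z.ofLp

end ParallelSplitting

theorem parallel_splitting_convergence_general
    [NormedAddCommGroup X] [InnerProductSpace ℝ X] [FiniteDimensional ℝ X]
    {m : ℕ} (hm : 2 ≤ m)
    (g : Fin m → X → EReal)
    (hgproper : ∀ i, EProper (g i)) (hglsc : ∀ i, LowerSemicontinuous (g i))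
    (hgconv : ∀ i, EConvexOn (g i))
    (prox : Fin m → X → X) (hprox : ∀ i, IsProx (g i) (prox i))
    (PD T : (Fin m → X) → (Fin m → X))
    (hPD : ∀ x : Fin m → X, PD x = fun _ => (m : ℝ)⁻¹ • ∑ i, x i)
    (hT : ∀ x : Fin m → X, T x = x - PD x + fun i => prox i ((2 • PD x - x) i))
    (v : Fin m → X)
    (hv : bIsMetricProj (closure (Set.range fun x : Fin m → X => x - T x)) 0 v)
    (hCQ : ∃ u w : Fin m → X,
      (∑ i, u i) = (0 : X) ∧ (∀ i, EConj (g i) (w i) ≠ ⊤) ∧ u + w = 0)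
    (Z : Set (Fin m → X))
    (hZ : Z = {x | ∃ a b : Fin m → X,
      ((∃ c : X, ∀ i, x i = c) ∧ (∑ i, a i) = (0 : X)) ∧
      b ∈ bSubdiff g (x - v) ∧ v = a + b})
    (hZne : Z.Nonempty)
    (xs : ℕ → Fin m → X) (xb : ℕ → X)
    (hxb : ∀ n : ℕ, xb n = (m : ℝ)⁻¹ • ∑ i, xs n i)
    (hrec : ∀ (n : ℕ) (i : Fin m),
      xs (n + 1) i = xs n i - xb n + prox i (2 • xb n - xs n i)) :
    ∃ xbar : X, Tendsto xb atTop (𝓝 xbar) ∧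
      ∀ z : X, (∑ i, g i (xbar - v i)) ≤ ∑ i, g i (z - v i) := by
  obtain ⟨u, w, hu, hw, huw⟩ := hCQ
  obtain ⟨xhat, hxhat⟩ := hZne
  rw [hZ] at hxhat
  obtain ⟨a, b, ⟨⟨c, hc⟩, ha⟩, hb, hvab⟩ := hxhat
  rw [show xhat = fun _ => c from funext hc] at hb
  have hTdr : ∀ y,
      WithLp.toLp 2 (T y) = drOperator (diagonal X m) (proxPi prox) (WithLp.toLp 2 y) :=
    fun y => by ext i; simp [drOperator_diagonal_apply, hT, hPD]
  have hxs : ∀ n, xs (n + 1) = T (xs n) := fun n => by funext i; simp [hT, hPD, hrec, hxb]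
  have h := isDROrbit_parallelSplitting hgproper hgconv hprox hTdr hv hxs ha hb hvab
  obtain ⟨C, hC⟩ := exists_coe_inner_sub_le_sepSum hgproper hw
  have hwsum : ∑ i, w i = 0 := by
    simp [eq_neg_of_add_eq_zero_right huw, Finset.sum_neg_distrib, hu]
  have hPv := h.starProjection_eq_zero (mem_diagonal_orthogonal_iff.mpr hwsum) hC
  obtain ⟨c', hc', hcert, hlim⟩ :=
    h.exists_tendsto_starProjection (lowerSemicontinuous_sepSum hgproper hglsc) hPv
  have i₀ : Fin m := ⟨0, by omega⟩
  refine ⟨c' i₀, ?_, sum_sub_le_of_mem_eSubdiff (c := c' i₀) ?_ (h.sub_mem_orthogonal hPv)⟩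
  · refine (((PiLp.continuous_apply 2 _ i₀).tendsto c').comp hlim).congr fun n => ?_
    simp [starProjection_diagonal_apply, hxb]
  · rwa [← eq_const_of_mem_diagonal hc' i₀]

/-- **parallel splitting.** In the product-space setup on `𝐗 = X^m`
(diagonal `Δ`, `𝐠 = ⊕ᵢ gᵢ`, `𝐓 = Id − P_Δ + Prox_𝐠 ∘ R_Δ`, minimal displacement
vector `𝐯 = (v₁,…,v_m)`), assuming `0 ∈ Δ^⊥ + dom 𝐠*` and `𝐙 ≠ ∅`: starting from
`x_{0,i} = x̄₀ = x₀` and iterating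
`x_{n+1,i} = x_{n,i} − x̄ₙ + Prox_{gᵢ}(2x̄ₙ − x_{n,i})`,
`x̄_{n+1} = (1/m) Σᵢ x_{n+1,i}`, the averaged sequence `(x̄ₙ)` converges to a
minimizer of `x ↦ Σᵢ gᵢ(x − vᵢ)` over `X`. -/
theorem parallel_splitting_convergence
    [NormedAddCommGroup X] [InnerProductSpace ℝ X] [FiniteDimensional ℝ X]
    {m : ℕ} (hm : 2 ≤ m)
    (g : Fin m → X → EReal)
    (hgproper : ∀ i, EProper (g i)) (hglsc : ∀ i, LowerSemicontinuous (g i))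
    (hgconv : ∀ i, EConvexOn (g i))
    (prox : Fin m → X → X) (hprox : ∀ i, IsProx (g i) (prox i))
    (PD T : (Fin m → X) → (Fin m → X))
    (hPD : ∀ x : Fin m → X, PD x = fun _ => (m : ℝ)⁻¹ • ∑ i, x i)
    (hT : ∀ x : Fin m → X, T x = x - PD x + fun i => prox i ((2 • PD x - x) i))
    (v : Fin m → X)
    (hv : bIsMetricProj (closure (Set.range fun x : Fin m → X => x - T x)) 0 v)
    (hCQ : ∃ u w : Fin m → X,
      (∑ i, u i) = (0 : X) ∧ (∀ i, EConj (g i) (w i) ≠ ⊤) ∧ u + w = 0)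
    (Z : Set (Fin m → X))
    (hZ : Z = {x | ∃ a b : Fin m → X,
      ((∃ c : X, ∀ i, x i = c) ∧ (∑ i, a i) = (0 : X)) ∧
      b ∈ bSubdiff g (x - v) ∧ v = a + b})
    (hZne : Z.Nonempty)
    (x0 : X) (xs : ℕ → Fin m → X) (xb : ℕ → X)
    (hinit : ∀ i, xs 0 i = x0)
    (hxb : ∀ n : ℕ, xb n = (m : ℝ)⁻¹ • ∑ i, xs n i)
    (hrec : ∀ (n : ℕ) (i : Fin m),
      xs (n + 1) i = xs n i - xb n + prox i (2 • xb n - xs n i)) :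
    ∃ xbar : X, Tendsto xb atTop (𝓝 xbar) ∧
      ∀ z : X, (∑ i, g i (xbar - v i)) ≤ ∑ i, g i (z - v i) :=
  parallel_splitting_convergence_general hm g hgproper hglsc hgconv prox hprox PD T hPD hT v hv hCQ
    Z hZ hZne xs xb hxb hrec
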